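/- arXiv:2402.13479 — 2 statements merged into one kernel-verified Lean document; each statement's English description precedes it below -/
import Mathlib

section
/- Let T be a bounded operator on a complex Hilbert space H. Then w((|T| − |T*|)/2 + i·Im T) ≤ (1/4)(‖|T| + |T*|‖ + sqrt(‖|T| − |T*|‖² + 4 w(T)²)). -/
set_option maxHeartbeats 1000000
set_option synthInstance.maxHeartbeats 200000

open scoped ComplexOrder
open ContinuousLinearMap (adjoint)

variable {H K : Type*} [NormedAddCommGroup H] [InnerProductSpace ℂ H] [CompleteSpace H]
  [NormedAddCommGroup K] [InnerProductSpace ℂ K] [CompleteSpace K]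

/-- The numerical radius of a bounded operator. -/
noncomputable def numRad {E : Type*} [NormedAddCommGroup E] [InnerProductSpace ℂ E]
    (T : E →L[ℂ] E) : ℝ :=
  ⨆ x : {x : E // ‖x‖ = 1}, ‖(inner ℂ (T x.1) x.1 : ℂ)‖

section Aux

set_option linter.unusedSectionVars false
set_option linter.unusedVariables false

lemma aux_sqrt_eq_cfc (a : H →L[ℂ] H) (ha : 0 ≤ a) : CFC.sqrt a = cfc Real.sqrt a := by
  refine (CFC.sqrt_eq_iff a _ ?_ ?_).mpr ?_
  · exact ha
  · exact cfc_nonneg (fun x _ => Real.sqrt_nonneg x)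
  · rw [← cfc_mul ..]
    calc cfc (fun x => Real.sqrt x * Real.sqrt x) a = cfc (fun x : ℝ => x) a := by
          apply cfc_congr
          intro x hx
          exact Real.mul_self_sqrt (spectrum_nonneg_of_nonneg ha hx)
      _ = a := cfc_id ℝ a

lemma aux_poly_intertwine (T : H →L[ℂ] H) (p : Polynomial ℝ) :
    T * Polynomial.aeval (star T * T) p = Polynomial.aeval (T * star T) p * T := by
  induction p using Polynomial.induction_on' with
  | add f g hf hg => simp [map_add, mul_add, add_mul, hf, hg]
  | monomial n c =>
      simp only [Polynomial.aeval_monomial]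
      have key : T * (star T * T) ^ n = (T * star T) ^ n * T := by
        induction n with
        | zero => simp
        | succ k ih =>
            rw [pow_succ, ← mul_assoc, ih, pow_succ]
            noncomm_ring
      rw [← mul_assoc, ← Algebra.commutes c T, mul_assoc, key, ← mul_assoc]

lemma aux_intertwine [Nontrivial H] (T : H →L[ℂ] H) {f : ℝ → ℝ} (hf : Continuous f) :
    T * cfc f (star T * T) = cfc f (T * star T) * T := by
  set A := star T * T with hA
  set B := T * star T with hB
  have hAsa : IsSelfAdjoint A := IsSelfAdjoint.star_mul_self T
  have hBsa : IsSelfAdjoint B := IsSelfAdjoint.mul_star_self T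
  set M : ℝ := max ‖A‖ ‖B‖ with hM
  have hspecA : spectrum ℝ A ⊆ Set.Icc (-M) M := by
    intro x hx
    have := spectrum.norm_le_norm_of_mem hx
    rw [Real.norm_eq_abs] at this
    have : |x| ≤ M := this.trans (le_max_left _ _)
    exact Set.mem_Icc.mpr (abs_le.mp this)
  have hspecB : spectrum ℝ B ⊆ Set.Icc (-M) M := by
    intro x hx
    have := spectrum.norm_le_norm_of_mem hx
    rw [Real.norm_eq_abs] at this
    have : |x| ≤ M := this.trans (le_max_right _ _)
    exact Set.mem_Icc.mpr (abs_le.mp this)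
  rw [← sub_eq_zero, ← norm_le_zero_iff]
  refine le_of_forall_pos_le_add fun ε hε => ?_
  obtain ⟨p, hp⟩ := exists_polynomial_near_of_continuousOn (-M) M f
    hf.continuousOn (ε / (2 * (‖T‖ + 1))) (by positivity)
  have hnear : ∀ (a : H →L[ℂ] H), IsSelfAdjoint a → spectrum ℝ a ⊆ Set.Icc (-M) M →
      ‖cfc f a - Polynomial.aeval a p‖ ≤ ε / (2 * (‖T‖ + 1)) := by
    intro a hasa hspec
    rw [← cfc_polynomial p a, ← cfc_sub _ _ a (by fun_prop) (by fun_prop)]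
    refine norm_cfc_le (by positivity) fun x hx => ?_
    rw [Real.norm_eq_abs, abs_sub_comm]
    exact (hp x (hspec hx)).le
  calc ‖T * cfc f A - cfc f B * T‖
      = ‖T * (cfc f A - Polynomial.aeval A p) - (cfc f B - Polynomial.aeval B p) * T‖ := by
        rw [mul_sub, sub_mul, aux_poly_intertwine T p, ← hB]
        abel_nf
    _ ≤ ‖T * (cfc f A - Polynomial.aeval A p)‖ + ‖(cfc f B - Polynomial.aeval B p) * T‖ :=
        norm_sub_le _ _
    _ ≤ ‖T‖ * (ε / (2 * (‖T‖ + 1))) + (ε / (2 * (‖T‖ + 1))) * ‖T‖ := by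
        gcongr
        · exact (norm_mul_le _ _).trans (by gcongr; exact hnear A hAsa hspecA)
        · exact (norm_mul_le _ _).trans (by gcongr; exact hnear B hBsa hspecB)
    _ ≤ 0 + ε := by
        rw [zero_add]
        have h1 : (0:ℝ) < ‖T‖ + 1 := by positivity
        rw [div_eq_mul_inv]
        have : ‖T‖ * (ε * (2 * (‖T‖ + 1))⁻¹) + ε * (2 * (‖T‖ + 1))⁻¹ * ‖T‖
            = ε * (‖T‖ / (‖T‖ + 1)) := by field_simp; ring
        rw [this]
        nlinarith [norm_nonneg T, div_le_one_of_le₀ (by linarith : ‖T‖ ≤ ‖T‖ + 1) h1.le]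

lemma aux_inner_le_of_le {C D : H →L[ℂ] H} (h : C ≤ D) (x : H) :
    Complex.re (inner ℂ (C x) x : ℂ) ≤ Complex.re (inner ℂ (D x) x : ℂ) := by
  have h' := (ContinuousLinearMap.le_def C D |>.mp h).inner_nonneg_left x
  simp only [ContinuousLinearMap.reApplyInnerSelf, ContinuousLinearMap.sub_apply,
    inner_sub_left, map_sub, RCLike.re_to_complex] at h'
  have h'' := (Complex.le_def.mp h').1
  simp only [Complex.zero_re, Complex.sub_re] at h''
  linarith

lemma aux_inner_nonneg {C : H →L[ℂ] H} (h : 0 ≤ C) (x : H) :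
    0 ≤ Complex.re (inner ℂ (C x) x : ℂ) := by
  simpa using aux_inner_le_of_le h x

lemma aux_mixed_schwarz [Nontrivial H] (T : H →L[ℂ] H) (x : H) :
    ‖(inner ℂ (T x) x : ℂ)‖ ^ 2 ≤
      Complex.re (inner ℂ (cfc Real.sqrt (star T * T) x) x : ℂ) *
        Complex.re (inner ℂ (cfc Real.sqrt (T * star T) x) x : ℂ) := by
  set A := star T * T with hA
  set B := T * star T with hB
  have hAnn : (0 : H →L[ℂ] H) ≤ A := star_mul_self_nonneg T
  have hBnn : (0 : H →L[ℂ] H) ≤ B := mul_star_self_nonneg T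
  have hAsa : IsSelfAdjoint A := IsSelfAdjoint.star_mul_self T
  have hBsa : IsSelfAdjoint B := IsSelfAdjoint.mul_star_self T
  set P := cfc Real.sqrt A with hP
  set Q := cfc Real.sqrt B with hQ
  set p := Complex.re (inner ℂ (P x) x : ℂ) with hp
  set q := Complex.re (inner ℂ (Q x) x : ℂ) with hq
  have hQnn : (0 : H →L[ℂ] H) ≤ Q := cfc_nonneg (fun t _ => Real.sqrt_nonneg t)
  have hq0 : 0 ≤ q := aux_inner_nonneg hQnn x
  have key : ∀ ε : ℝ, 0 < ε → ‖(inner ℂ (T x) x : ℂ)‖ ^ 2 ≤ (p + ε * ‖x‖ ^ 2) * q := by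
    intro ε hε
    have hden : ∀ t : ℝ, Real.sqrt t + ε ≠ 0 := fun t => by positivity
    set g : ℝ → ℝ := fun t => (Real.sqrt t + ε)⁻¹ with hgdef
    have hg : Continuous g := (Real.continuous_sqrt.add continuous_const).inv₀ hden
    set r : ℝ → ℝ := fun t => Real.sqrt (Real.sqrt t + ε) with hrdef
    have hr : Continuous r := Real.continuous_sqrt.comp (Real.continuous_sqrt.add continuous_const)
    set C := T * cfc g A with hC
    set R := cfc r A with hR
    set Pe := cfc (fun t => Real.sqrt t + ε) A with hPe
    have hRsa : IsSelfAdjoint R := cfc_predicate r A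
    have hgsa : IsSelfAdjoint (cfc g A) := cfc_predicate g A
    have hRR : R * R = Pe := by
      rw [hR, ← cfc_mul r r A (by fun_prop) (by fun_prop)]
      exact cfc_congr fun t _ => Real.mul_self_sqrt (by positivity)
    have hCP : C * Pe = T := by
      rw [hC, mul_assoc, ← cfc_mul g _ A (by fun_prop) (by fun_prop)]
      have : cfc (fun t => g t * (Real.sqrt t + ε)) A = 1 := by
        calc cfc (fun t => g t * (Real.sqrt t + ε)) A = cfc (fun _ : ℝ => (1:ℝ)) A :=
              cfc_congr fun t _ => inv_mul_cancel₀ (hden t)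
          _ = 1 := cfc_const_one ℝ A
      rw [this, mul_one]
    have hPeP : Pe = P + ε • 1 := by
      rw [hPe, cfc_add A _ _ (by fun_prop) (by fun_prop), hP]
      congr 1
      rw [cfc_const ε A, Algebra.algebraMap_eq_smul_one]
    have hinter : T * cfc g A = cfc g B * T := aux_intertwine T hg
    have hinter' : cfc g A * star T = star T * cfc g B := by
      have := congrArg star hinter
      simpa [star_mul, hgsa.star_eq, (cfc_predicate g B : IsSelfAdjoint (cfc g B)).star_eq]
        using this
    have hkey : C * Pe * star C ≤ Q := by
      have hsC : star C = cfc g A * star T := by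
        rw [hC, star_mul, hgsa.star_eq]
      rw [hCP, hsC, ← mul_assoc, hinter, mul_assoc]
      have hBid : cfc g B * B = cfc (fun t => g t * t) B := by
        have h1 : cfc (fun t => g t * id t) B = cfc g B * cfc id B :=
          cfc_mul g id B (by fun_prop) (by fun_prop)
        rw [cfc_id ℝ B] at h1
        exact h1.symm
      rw [hBid, hQ]
      refine cfc_mono (fun t ht => ?_) ((hg.mul continuous_id).continuousOn)
        Real.continuous_sqrt.continuousOn
      have ht0 : 0 ≤ t := spectrum_nonneg_of_nonneg hBnn ht
      have hst : 0 < Real.sqrt t + ε := by positivity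
      rw [hgdef]
      rw [inv_mul_eq_div, div_le_iff₀ hst]
      nlinarith [Real.sq_sqrt ht0, Real.sqrt_nonneg t]
    set v := adjoint C x with hv
    have hRadj : adjoint R = R := by
      rw [← ContinuousLinearMap.star_eq_adjoint, hRsa.star_eq]
    have hRmove : ∀ u w : H, (inner ℂ (R u) w : ℂ) = inner ℂ u (R w) := by
      intro u w
      conv_lhs => rw [← hRadj]
      exact ContinuousLinearMap.adjoint_inner_left R w u
    have hz : (inner ℂ (T x) x : ℂ) = inner ℂ (R x) (R v) := by
      conv_lhs => rw [← hCP, ← hRR]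
      show (inner ℂ ((C ∘L (R ∘L R)) x) x : ℂ) = _
      rw [ContinuousLinearMap.comp_apply, ContinuousLinearMap.comp_apply]
      rw [← ContinuousLinearMap.adjoint_inner_right C, ← hv, hRmove]
    have hRsq : ∀ u : H, ‖R u‖ ^ 2 = Complex.re (inner ℂ (Pe u) u : ℂ) := by
      intro u
      rw [← hRR]
      show _ = Complex.re (inner ℂ ((R ∘L R) u) u : ℂ)
      rw [ContinuousLinearMap.comp_apply, hRmove (R u) u, ← RCLike.re_to_complex,
        inner_self_eq_norm_sq]
    have hRx : ‖R x‖ ^ 2 = Complex.re (inner ℂ (Pe x) x : ℂ) := hRsq x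
    have hRv : ‖R v‖ ^ 2 = Complex.re (inner ℂ ((C * Pe * star C) x) x : ℂ) := by
      rw [hRsq v]
      congr 1
      show (inner ℂ (Pe v) v : ℂ) = (inner ℂ ((C ∘L (Pe ∘L star C)) x) x : ℂ)
      rw [ContinuousLinearMap.comp_apply, ContinuousLinearMap.comp_apply]
      rw [← ContinuousLinearMap.adjoint_inner_right C]
      congr 2 <;> rw [hv, ContinuousLinearMap.star_eq_adjoint]
    have hPex : Complex.re (inner ℂ (Pe x) x : ℂ) = p + ε * ‖x‖ ^ 2 := by
      have hx2 : Complex.re (inner ℂ x x : ℂ) = ‖x‖ ^ 2 := by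
        rw [← RCLike.re_to_complex, inner_self_eq_norm_sq]
      rw [hPeP]
      have happ : (P + ε • (1 : H →L[ℂ] H)) x = P x + ε • x := rfl
      rw [happ, inner_add_left, Complex.add_re, hp]
      congr 1
      rw [RCLike.real_smul_eq_coe_smul (K := ℂ), inner_smul_left]
      simp [Complex.mul_re, hx2]
      exact Or.inl (by rw [← Complex.ofReal_pow, Complex.ofReal_re])
    calc ‖(inner ℂ (T x) x : ℂ)‖ ^ 2 ≤ (‖R x‖ * ‖R v‖) ^ 2 := by
          rw [hz]
          have := norm_inner_le_norm (𝕜 := ℂ) (R x) (R v)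
          exact pow_le_pow_left₀ (norm_nonneg _) this 2
      _ = ‖R x‖ ^ 2 * ‖R v‖ ^ 2 := by ring
      _ ≤ (p + ε * ‖x‖ ^ 2) * q := by
          rw [hRx, hRv, hPex]
          refine mul_le_mul_of_nonneg_left ?_ ?_
          · exact aux_inner_le_of_le hkey x
          · rw [← hPex]; rw [← hRx]; positivity
  refine le_of_forall_pos_le_add fun ε' hε' => ?_
  have hd : 0 < ‖x‖ ^ 2 * q + 1 := by positivity
  have := key (ε' / (‖x‖ ^ 2 * q + 1)) (by positivity)
  refine this.trans ?_
  rw [add_mul]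
  have : ε' / (‖x‖ ^ 2 * q + 1) * ‖x‖ ^ 2 * q ≤ ε' := by
    rw [div_mul_eq_mul_div, div_mul_eq_mul_div, div_le_iff₀ hd]
    nlinarith [sq_nonneg (‖x‖), hq0]
  nlinarith

lemma aux_le_numRad (T : H →L[ℂ] H) {x : H} (hx : ‖x‖ = 1) :
    ‖(inner ℂ (T x) x : ℂ)‖ ≤ numRad T := by
  have hbdd : BddAbove (Set.range fun y : {y : H // ‖y‖ = 1} => ‖(inner ℂ (T y.1) y.1 : ℂ)‖) := by
    refine ⟨‖T‖, ?_⟩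
    rintro _ ⟨y, rfl⟩
    calc ‖(inner ℂ (T y.1) y.1 : ℂ)‖ ≤ ‖T y.1‖ * ‖y.1‖ := norm_inner_le_norm _ _
      _ ≤ ‖T‖ * ‖y.1‖ * ‖y.1‖ := by gcongr; exact T.le_opNorm y.1
      _ = ‖T‖ := by rw [y.2]; ring
  exact le_ciSup hbdd ⟨x, hx⟩

lemma aux_numRad_le {T : H →L[ℂ] H} {c : ℝ} (hc : 0 ≤ c)
    (h : ∀ x : H, ‖x‖ = 1 → ‖(inner ℂ (T x) x : ℂ)‖ ≤ c) : numRad T ≤ c := by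
  rw [numRad]
  rcases isEmpty_or_nonempty {x : H // ‖x‖ = 1} with he | hne
  · rw [Real.iSup_of_isEmpty]; exact hc
  · exact ciSup_le fun x => h x.1 x.2

lemma aux_re_inner_abs_le (C : H →L[ℂ] H) {x : H} (hx : ‖x‖ = 1) :
    |Complex.re (inner ℂ (C x) x : ℂ)| ≤ ‖C‖ := by
  calc |Complex.re (inner ℂ (C x) x : ℂ)| ≤ ‖(inner ℂ (C x) x : ℂ)‖ :=
        Complex.abs_re_le_norm _
    _ ≤ ‖C x‖ * ‖x‖ := norm_inner_le_norm _ _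
    _ ≤ ‖C‖ * ‖x‖ * ‖x‖ := by gcongr; exact C.le_opNorm x
    _ = ‖C‖ := by rw [hx]; ring

lemma aux_scalar {p q b w M D : ℝ} (hp : 0 ≤ p) (hq : 0 ≤ q) (hb2 : b ^ 2 ≤ p * q)
    (hbw : |b| ≤ w) (hpq : p + q ≤ M) (hd : |p - q| ≤ D) :
    Real.sqrt (((p - q) / 2) ^ 2 + b ^ 2) ≤ (1 / 4) * (M + Real.sqrt (D ^ 2 + 4 * w ^ 2)) := by
  set d : ℝ := (p - q) / 2 with hddef
  set s : ℝ := (p + q) / 2 with hsdef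
  have h1 : Real.sqrt (d ^ 2 + b ^ 2) ≤ s := by
    have hle : d ^ 2 + b ^ 2 ≤ s ^ 2 := by
      rw [hddef, hsdef]; nlinarith
    calc Real.sqrt (d ^ 2 + b ^ 2) ≤ Real.sqrt (s ^ 2) := Real.sqrt_le_sqrt hle
      _ = s := Real.sqrt_sq (by rw [hsdef]; linarith)
  have h2 : Real.sqrt (d ^ 2 + b ^ 2) ≤ Real.sqrt (D ^ 2 + 4 * w ^ 2) / 2 := by
    have hb2w : b ^ 2 ≤ w ^ 2 := by nlinarith [abs_nonneg b, sq_abs b]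
    have hdD : d ^ 2 ≤ (D / 2) ^ 2 := by
      have h1 := sq_abs (p - q)
      have h2 := abs_nonneg (p - q)
      rw [hddef]; nlinarith
    calc Real.sqrt (d ^ 2 + b ^ 2) ≤ Real.sqrt ((D ^ 2 + 4 * w ^ 2) * (1 / 4)) :=
          Real.sqrt_le_sqrt (by nlinarith)
      _ = Real.sqrt (D ^ 2 + 4 * w ^ 2) / 2 := by
          rw [Real.sqrt_mul (by positivity)]
          rw [show (1 / 4 : ℝ) = (1 / 2) ^ 2 by norm_num, Real.sqrt_sq (by norm_num)]
          ring
  have hs : s ≤ M / 2 := by rw [hsdef]; linarith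
  linarith [Real.sqrt_nonneg (d ^ 2 + b ^ 2)]

end Aux


theorem numRad_im_beta1_bound (T : H →L[ℂ] H) :
    numRad ((1 / 2 : ℂ) • (CFC.sqrt (adjoint T ∘L T) - CFC.sqrt (T ∘L adjoint T)) +
        Complex.I • (((2 : ℂ) * Complex.I)⁻¹ • (T - adjoint T))) ≤
      (1 / 4) * (‖CFC.sqrt (adjoint T ∘L T) + CFC.sqrt (T ∘L adjoint T)‖ +
        Real.sqrt (‖CFC.sqrt (adjoint T ∘L T) - CFC.sqrt (T ∘L adjoint T)‖ ^ 2 +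
          4 * numRad T ^ 2)) := by
  have hAe : adjoint T ∘L T = star T * T := by
    rw [ContinuousLinearMap.star_eq_adjoint]; rfl
  have hBe : T ∘L adjoint T = T * star T := by
    rw [ContinuousLinearMap.star_eq_adjoint]; rfl
  have hAnn : (0 : H →L[ℂ] H) ≤ star T * T := star_mul_self_nonneg T
  have hBnn : (0 : H →L[ℂ] H) ≤ T * star T := mul_star_self_nonneg T
  rw [hAe, hBe, aux_sqrt_eq_cfc _ hAnn, aux_sqrt_eq_cfc _ hBnn]
  set P := cfc Real.sqrt (star T * T) with hPdef
  set Q := cfc Real.sqrt (T * star T) with hQdef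
  have hPnn : (0 : H →L[ℂ] H) ≤ P := cfc_nonneg (fun t _ => Real.sqrt_nonneg t)
  have hQnn : (0 : H →L[ℂ] H) ≤ Q := cfc_nonneg (fun t _ => Real.sqrt_nonneg t)
  have hPsa : IsSelfAdjoint P := cfc_predicate _ _
  have hQsa : IsSelfAdjoint Q := cfc_predicate _ _
  have hrhs : 0 ≤ (1 / 4 : ℝ) * (‖P + Q‖ +
      Real.sqrt (‖P - Q‖ ^ 2 + 4 * numRad T ^ 2)) := by positivity
  rcases subsingleton_or_nontrivial H with hsub | hnt
  · have hempty : IsEmpty {x : H // ‖x‖ = 1} := ⟨fun y => by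
      have h1 := y.2
      rw [Subsingleton.elim y.1 0, norm_zero] at h1
      exact one_ne_zero h1.symm⟩
    rw [numRad, Real.iSup_of_isEmpty]
    exact hrhs
  refine aux_numRad_le hrhs (fun x hx => ?_)
  -- simplify the I-smul
  have hIsmul : Complex.I • (((2 : ℂ) * Complex.I)⁻¹ • (T - adjoint T))
      = (1 / 2 : ℂ) • (T - adjoint T) := by
    rw [smul_smul]
    congr 1
    have h0 : ((2 : ℂ) * Complex.I) ≠ 0 := mul_ne_zero two_ne_zero Complex.I_ne_zero
    field_simp
  rw [hIsmul, ← smul_add]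
  set z := (inner ℂ (T x) x : ℂ) with hzdef
  set p := Complex.re (inner ℂ (P x) x : ℂ) with hpdef
  set q := Complex.re (inner ℂ (Q x) x : ℂ) with hqdef
  set b := z.im with hbdef
  -- real-ness of the selfadjoint inner ℂ products
  have hreal : ∀ (C : H →L[ℂ] H), IsSelfAdjoint C →
      (inner ℂ (C x) x : ℂ) = (Complex.re (inner ℂ (C x) x : ℂ) : ℂ) := by
    intro C hC
    have hsym := (ContinuousLinearMap.isSelfAdjoint_iff_isSymmetric.mp hC)
    have := hsym.coe_reApplyInnerSelf_apply x
    rw [← this]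
    norm_cast
  have hPreal : (inner ℂ (P x) x : ℂ) = (p : ℂ) := hreal P hPsa
  have hQreal : (inner ℂ (Q x) x : ℂ) = (q : ℂ) := hreal Q hQsa
  have hTadj : (inner ℂ ((adjoint T) x) x : ℂ) = starRingEnd ℂ z := by
    rw [ContinuousLinearMap.adjoint_inner_left, hzdef, ← inner_conj_symm]
  -- compute the inner ℂ product of the operator in question
  have hSx : (inner ℂ (((1 / 2 : ℂ) • (P - Q + (T - adjoint T))) x) x : ℂ)
      = (((p - q) / 2 : ℝ) : ℂ) + ((b : ℝ) : ℂ) * Complex.I := by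
    rw [ContinuousLinearMap.smul_apply, inner_smul_left]
    have happ : (P - Q + (T - adjoint T)) x = P x - Q x + (T x - (adjoint T) x) := rfl
    rw [happ, inner_add_left, inner_sub_left, inner_sub_left, hPreal, hQreal, hTadj, ← hzdef]
    have hzsub : z - starRingEnd ℂ z = (2 * b : ℝ) * Complex.I := by
      rw [Complex.sub_conj]
      try push_cast [hbdef]
      try ring
    rw [hzsub]
    have hconj : starRingEnd ℂ (1 / 2 : ℂ) = (1 / 2 : ℂ) := by
      rw [Complex.conj_eq_iff_im]
      norm_num
    rw [hconj]
    push_cast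
    ring
  rw [hSx]
  have hnorm : ‖(((p - q) / 2 : ℝ) : ℂ) + ((b : ℝ) : ℂ) * Complex.I‖
      = Real.sqrt (((p - q) / 2) ^ 2 + b ^ 2) := by
    rw [Complex.norm_def, Complex.normSq_add_mul_I]
  rw [hnorm]
  -- the scalar facts
  have hp0 : 0 ≤ p := aux_inner_nonneg hPnn x
  have hq0 : 0 ≤ q := aux_inner_nonneg hQnn x
  have hzb : |b| ≤ ‖z‖ := by
    rw [hbdef]
    exact Complex.abs_im_le_norm z
  have hb2 : b ^ 2 ≤ p * q := by
    have hms := aux_mixed_schwarz T x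
    rw [← hzdef, ← hPdef, ← hQdef, ← hpdef, ← hqdef] at hms
    have : b ^ 2 ≤ ‖z‖ ^ 2 := by
      rw [← sq_abs b]
      exact pow_le_pow_left₀ (abs_nonneg b) hzb 2
    linarith
  have hbw : |b| ≤ numRad T := hzb.trans (aux_le_numRad T hx)
  have hpq : p + q ≤ ‖P + Q‖ := by
    have h1 := aux_re_inner_abs_le (P + Q) hx
    have h2 : Complex.re (inner ℂ ((P + Q) x) x : ℂ) = p + q := by
      rw [ContinuousLinearMap.add_apply, inner_add_left, Complex.add_re, hpdef, hqdef]
    rw [h2] at h1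
    exact (le_abs_self _).trans h1
  have hD : |p - q| ≤ ‖P - Q‖ := by
    have h1 := aux_re_inner_abs_le (P - Q) hx
    have h2 : Complex.re (inner ℂ ((P - Q) x) x : ℂ) = p - q := by
      rw [ContinuousLinearMap.sub_apply, inner_sub_left, Complex.sub_re, hpdef, hqdef]
    rw [h2] at h1
    exact h1
  exact aux_scalar hp0 hq0 hb2 hbw hpq hD
end

section
/- Let T be a bounded operator on a complex Hilbert space H. For every unit vector x ∈ H, |⟨((|T*| − |T|)/2 + i·Re T) x, x⟩| ≤ (1/2)⟨(|T| + |T*|)x, x⟩. -/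
set_option maxHeartbeats 1000000
set_option synthInstance.maxHeartbeats 200000

open scoped ComplexOrder
open ContinuousLinearMap (adjoint)

variable {H K : Type*} [NormedAddCommGroup H] [InnerProductSpace ℂ H] [CompleteSpace H]
  [NormedAddCommGroup K] [InnerProductSpace ℂ K] [CompleteSpace K]
set_option linter.unusedSectionVars false

/-- Cauchy–Schwarz for a positive operator. -/
lemma pwrb_cs_pos (p : H →L[ℂ] H) (hp : 0 ≤ p) (u v : H) :
    ‖(inner ℂ (p u) v : ℂ)‖ ≤
      Real.sqrt ((inner ℂ (p u) u : ℂ).re) * Real.sqrt ((inner ℂ (p v) v : ℂ).re) := by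
  set s := CFC.sqrt p with hs_def
  have hs0 : 0 ≤ s := CFC.sqrt_nonneg _
  have hs : s ∘L s = p := by
    have := CFC.sqrt_mul_sqrt_self p hp
    simpa [ContinuousLinearMap.mul_def] using this
  have hsa : IsSelfAdjoint s := hs0.isSelfAdjoint
  have hadj : adjoint s = s := by
    rwa [← ContinuousLinearMap.star_eq_adjoint]
  have key : ∀ w₁ w₂ : H, (inner ℂ (p w₁) w₂ : ℂ) = inner ℂ (s w₁) (s w₂) := by
    intro w₁ w₂
    have h2 := ContinuousLinearMap.adjoint_inner_left s w₂ (s w₁)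
    rw [hadj] at h2
    conv_lhs => rw [← hs]
    exact h2
  have hnorm : ∀ w : H, ‖s w‖ = Real.sqrt ((inner ℂ (p w) w : ℂ).re) := by
    intro w
    rw [key w w]
    have h3 : ((inner ℂ (s w) (s w) : ℂ)).re = ‖s w‖ ^ 2 := @inner_self_eq_norm_sq ℂ _ _ _ _ (s w)
    rw [h3, Real.sqrt_sq (norm_nonneg _)]
  calc ‖(inner ℂ (p u) v : ℂ)‖ = ‖(inner ℂ (s u) (s v) : ℂ)‖ := by rw [key]
    _ ≤ ‖s u‖ * ‖s v‖ := norm_inner_le_norm _ _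
    _ = _ := by rw [hnorm, hnorm]

/-- block matrix [[0, T*],[T, 0]] on H ⊕₂ H -/
noncomputable def pwrbM (T : H →L[ℂ] H) : WithLp 2 (H × H) →L[ℂ] WithLp 2 (H × H) :=
  (WithLp.prodContinuousLinearEquiv 2 ℂ H H).symm.toContinuousLinearMap ∘L
    ((adjoint T ∘L ContinuousLinearMap.snd ℂ H H).prod (T ∘L ContinuousLinearMap.fst ℂ H H)) ∘L
    (WithLp.prodContinuousLinearEquiv 2 ℂ H H).toContinuousLinearMap

/-- block diagonal [[A,0],[0,B]] on H ⊕₂ H -/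
noncomputable def pwrbD (A B : H →L[ℂ] H) : WithLp 2 (H × H) →L[ℂ] WithLp 2 (H × H) :=
  (WithLp.prodContinuousLinearEquiv 2 ℂ H H).symm.toContinuousLinearMap ∘L
    ((A ∘L ContinuousLinearMap.fst ℂ H H).prod (B ∘L ContinuousLinearMap.snd ℂ H H)) ∘L
    (WithLp.prodContinuousLinearEquiv 2 ℂ H H).toContinuousLinearMap

lemma pwrbM_apply_fst (T : H →L[ℂ] H) (z : WithLp 2 (H × H)) :
    (pwrbM T z).fst = adjoint T z.snd := rfl
lemma pwrbM_apply_snd (T : H →L[ℂ] H) (z : WithLp 2 (H × H)) :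
    (pwrbM T z).snd = T z.fst := rfl
lemma pwrbD_apply_fst (A B : H →L[ℂ] H) (z : WithLp 2 (H × H)) :
    (pwrbD A B z).fst = A z.fst := rfl
lemma pwrbD_apply_snd (A B : H →L[ℂ] H) (z : WithLp 2 (H × H)) :
    (pwrbD A B z).snd = B z.snd := rfl

lemma pwrbM_sa (T : H →L[ℂ] H) : IsSelfAdjoint (pwrbM T) := by
  rw [ContinuousLinearMap.isSelfAdjoint_iff_isSymmetric]
  intro z w
  show (inner ℂ _ _ : ℂ) = _
  rw [WithLp.prod_inner_apply, WithLp.prod_inner_apply]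
  show (inner ℂ (adjoint T z.snd) w.fst : ℂ) + inner ℂ (T z.fst) w.snd
      = inner ℂ z.fst (adjoint T w.snd) + inner ℂ z.snd (T w.fst)
  rw [ContinuousLinearMap.adjoint_inner_left, ContinuousLinearMap.adjoint_inner_right]
  ring

lemma pwrbM_sq (T : H →L[ℂ] H) :
    pwrbM T * pwrbM T = pwrbD (adjoint T ∘L T) (T ∘L adjoint T) := rfl

lemma pwrbD_mul (A B A' B' : H →L[ℂ] H) :
    pwrbD A B * pwrbD A' B' = pwrbD (A ∘L A') (B ∘L B') := rfl

lemma pwrbD_nonneg {A B : H →L[ℂ] H} (hA : 0 ≤ A) (hB : 0 ≤ B) : 0 ≤ pwrbD A B := by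
  rw [ContinuousLinearMap.nonneg_iff_isPositive] at hA hB ⊢
  constructor
  · intro z w
    show (inner ℂ _ _ : ℂ) = _
    rw [WithLp.prod_inner_apply, WithLp.prod_inner_apply]
    show (inner ℂ (A z.fst) w.fst : ℂ) + inner ℂ (B z.snd) w.snd
        = inner ℂ z.fst (A w.fst) + inner ℂ z.snd (B w.snd)
    have hAs := (ContinuousLinearMap.isSelfAdjoint_iff_isSymmetric.mp hA.isSelfAdjoint)
    have hBs := (ContinuousLinearMap.isSelfAdjoint_iff_isSymmetric.mp hB.isSelfAdjoint)
    exact congrArg₂ HAdd.hAdd (hAs z.fst w.fst) (hBs z.snd w.snd)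
  · intro z
    have h1 := hA.inner_nonneg_left z.fst
    have h2 := hB.inner_nonneg_left z.snd
    have : ContinuousLinearMap.reApplyInnerSelf (pwrbD A B) z
        = (RCLike.re (inner ℂ (A z.fst) z.fst : ℂ)) + RCLike.re (inner ℂ (B z.snd) z.snd : ℂ) := by
      unfold ContinuousLinearMap.reApplyInnerSelf
      rw [WithLp.prod_inner_apply]
      simp [pwrbD_apply_fst, pwrbD_apply_snd]
    rw [this]
    exact add_nonneg (Complex.nonneg_iff.mp h1).1 (Complex.nonneg_iff.mp h2).1

lemma pwrb_sqrt_comp (A : H →L[ℂ] H) (hA : 0 ≤ A) : CFC.sqrt A ∘L CFC.sqrt A = A := by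
  have := CFC.sqrt_mul_sqrt_self A hA
  simpa [ContinuousLinearMap.mul_def] using this

lemma pwrb_adj_mul_nonneg (T : H →L[ℂ] H) : 0 ≤ adjoint T ∘L T := by
  have := star_mul_self_nonneg T
  simpa [ContinuousLinearMap.star_eq_adjoint, ContinuousLinearMap.mul_def] using this

lemma pwrb_mul_adj_nonneg (T : H →L[ℂ] H) : 0 ≤ T ∘L adjoint T := by
  have := mul_star_self_nonneg T
  simpa [ContinuousLinearMap.star_eq_adjoint, ContinuousLinearMap.mul_def] using this

lemma pwrb_posPart_add_negPart (T : H →L[ℂ] H) :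
    (pwrbM T)⁺ + (pwrbM T)⁻ =
      pwrbD (CFC.sqrt (adjoint T ∘L T)) (CFC.sqrt (T ∘L adjoint T)) := by
  set M := pwrbM T with hM_def
  have hpq := CFC.posPart_mul_negPart M
  have hqp := CFC.negPart_mul_posPart M
  have hd : M⁺ - M⁻ = M := CFC.posPart_sub_negPart M (pwrbM_sa T)
  have h1 : (M⁺ + M⁻) * (M⁺ + M⁻) = M * M := by
    conv_rhs => rw [← hd]
    rw [add_mul, mul_add, mul_add, sub_mul, mul_sub, mul_sub, hpq, hqp]
    abel
  have e1 : CFC.sqrt (M * M) = M⁺ + M⁻ :=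
    CFC.sqrt_unique h1 (add_nonneg (CFC.posPart_nonneg M) (CFC.negPart_nonneg M))
  have h2 : pwrbD (CFC.sqrt (adjoint T ∘L T)) (CFC.sqrt (T ∘L adjoint T)) *
      pwrbD (CFC.sqrt (adjoint T ∘L T)) (CFC.sqrt (T ∘L adjoint T)) = M * M := by
    rw [pwrbD_mul, pwrb_sqrt_comp _ (pwrb_adj_mul_nonneg T),
      pwrb_sqrt_comp _ (pwrb_mul_adj_nonneg T), hM_def, pwrbM_sq]
  have e2 : CFC.sqrt (M * M) = pwrbD (CFC.sqrt (adjoint T ∘L T)) (CFC.sqrt (T ∘L adjoint T)) :=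
    CFC.sqrt_unique h2 (pwrbD_nonneg (CFC.sqrt_nonneg _) (CFC.sqrt_nonneg _))
  rw [← e1, e2]

lemma pwrb_sqrtCS {a b c d : ℝ} (ha : 0 ≤ a) (hb : 0 ≤ b) (hc : 0 ≤ c) (hd : 0 ≤ d) :
    Real.sqrt a * Real.sqrt c + Real.sqrt b * Real.sqrt d ≤ Real.sqrt ((a+b)*(c+d)) := by
  have key : (Real.sqrt a * Real.sqrt c + Real.sqrt b * Real.sqrt d)^2 ≤ (a+b)*(c+d) := by
    nlinarith [Real.sq_sqrt ha, Real.sq_sqrt hb, Real.sq_sqrt hc, Real.sq_sqrt hd,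
      Real.sqrt_nonneg a, Real.sqrt_nonneg b, Real.sqrt_nonneg c, Real.sqrt_nonneg d,
      sq_nonneg (Real.sqrt a * Real.sqrt d - Real.sqrt b * Real.sqrt c)]
  have h0 : 0 ≤ Real.sqrt a * Real.sqrt c + Real.sqrt b * Real.sqrt d := by positivity
  calc Real.sqrt a * Real.sqrt c + Real.sqrt b * Real.sqrt d
      = Real.sqrt ((Real.sqrt a * Real.sqrt c + Real.sqrt b * Real.sqrt d)^2) :=
        (Real.sqrt_sq h0).symm
    _ ≤ Real.sqrt ((a+b)*(c+d)) := Real.sqrt_le_sqrt key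

lemma pwrb_mixed (T : H →L[ℂ] H) (x y : H) :
    ‖(inner ℂ (T x) y : ℂ)‖ ≤
      Real.sqrt ((inner ℂ (CFC.sqrt (adjoint T ∘L T) x) x : ℂ).re) *
        Real.sqrt ((inner ℂ (CFC.sqrt (T ∘L adjoint T) y) y : ℂ).re) := by
  set M := pwrbM T with hM_def
  set z : WithLp 2 (H × H) := (WithLp.equiv 2 (H × H)).symm (x, 0) with hz_def
  set w : WithLp 2 (H × H) := (WithLp.equiv 2 (H × H)).symm (0, y) with hw_def
  have hzf : z.fst = x := rfl
  have hzs : z.snd = 0 := rfl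
  have hwf : w.fst = 0 := rfl
  have hws : w.snd = y := rfl
  have h_inner : (inner ℂ (T x) y : ℂ) = inner ℂ (M z) w := by
    rw [WithLp.prod_inner_apply]
    show (inner ℂ (T x) y : ℂ) = inner ℂ (adjoint T z.snd) w.fst + inner ℂ (T z.fst) w.snd
    rw [hzf, hzs, hwf, hws]
    simp
  have hd : M⁺ - M⁻ = M := CFC.posPart_sub_negPart M (pwrbM_sa T)
  have hsplit : (inner ℂ (M z) w : ℂ) = inner ℂ (M⁺ z) w - inner ℂ (M⁻ z) w := by
    conv_lhs => rw [← hd]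
    rw [ContinuousLinearMap.sub_apply, inner_sub_left]
  set a1 := ((inner ℂ (M⁺ z) z : ℂ)).re
  set b1 := ((inner ℂ (M⁻ z) z : ℂ)).re
  set c1 := ((inner ℂ (M⁺ w) w : ℂ)).re
  set d1 := ((inner ℂ (M⁻ w) w : ℂ)).re
  have hp := CFC.posPart_nonneg M
  have hq := CFC.negPart_nonneg M
  have ha1 : 0 ≤ a1 := (Complex.nonneg_iff.mp (((ContinuousLinearMap.nonneg_iff_isPositive _).mp hp).inner_nonneg_left z)).1
  have hb1 : 0 ≤ b1 := (Complex.nonneg_iff.mp (((ContinuousLinearMap.nonneg_iff_isPositive _).mp hq).inner_nonneg_left z)).1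
  have hc1 : 0 ≤ c1 := (Complex.nonneg_iff.mp (((ContinuousLinearMap.nonneg_iff_isPositive _).mp hp).inner_nonneg_left w)).1
  have hd1 : 0 ≤ d1 := (Complex.nonneg_iff.mp (((ContinuousLinearMap.nonneg_iff_isPositive _).mp hq).inner_nonneg_left w)).1
  have hsum1 : a1 + b1 = ((inner ℂ (CFC.sqrt (adjoint T ∘L T) x) x : ℂ)).re := by
    have : (inner ℂ (M⁺ z) z : ℂ) + inner ℂ (M⁻ z) z = inner ℂ ((M⁺ + M⁻) z) z := by
      rw [ContinuousLinearMap.add_apply, inner_add_left]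
    have h2 : ((inner ℂ ((M⁺ + M⁻) z) z : ℂ)).re
        = ((inner ℂ (CFC.sqrt (adjoint T ∘L T) x) x : ℂ)).re := by
      rw [pwrb_posPart_add_negPart T]
      rw [WithLp.prod_inner_apply]
      have e1 : (pwrbD (CFC.sqrt (adjoint T ∘L T)) (CFC.sqrt (T ∘L adjoint T)) z).fst
          = CFC.sqrt (adjoint T ∘L T) x := by rw [pwrbD_apply_fst, hzf]
      have e2 : (pwrbD (CFC.sqrt (adjoint T ∘L T)) (CFC.sqrt (T ∘L adjoint T)) z).snd
          = (0 : H) := by rw [pwrbD_apply_snd, hzs, map_zero]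
      simp only [WithLp.ofLp_fst, WithLp.ofLp_snd]
      rw [e1, e2, hzf, hzs]
      simp
    calc a1 + b1 = ((inner ℂ (M⁺ z) z : ℂ) + inner ℂ (M⁻ z) z).re := by
          rw [Complex.add_re]
      _ = _ := by rw [this, h2]
  have hsum2 : c1 + d1 = ((inner ℂ (CFC.sqrt (T ∘L adjoint T) y) y : ℂ)).re := by
    have : (inner ℂ (M⁺ w) w : ℂ) + inner ℂ (M⁻ w) w = inner ℂ ((M⁺ + M⁻) w) w := by
      rw [ContinuousLinearMap.add_apply, inner_add_left]
    have h2 : ((inner ℂ ((M⁺ + M⁻) w) w : ℂ)).re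
        = ((inner ℂ (CFC.sqrt (T ∘L adjoint T) y) y : ℂ)).re := by
      rw [pwrb_posPart_add_negPart T]
      rw [WithLp.prod_inner_apply]
      have e1 : (pwrbD (CFC.sqrt (adjoint T ∘L T)) (CFC.sqrt (T ∘L adjoint T)) w).fst
          = (0 : H) := by rw [pwrbD_apply_fst, hwf, map_zero]
      have e2 : (pwrbD (CFC.sqrt (adjoint T ∘L T)) (CFC.sqrt (T ∘L adjoint T)) w).snd
          = CFC.sqrt (T ∘L adjoint T) y := by rw [pwrbD_apply_snd, hws]
      simp only [WithLp.ofLp_fst, WithLp.ofLp_snd]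
      rw [e1, e2, hwf, hws]
      simp
    calc c1 + d1 = ((inner ℂ (M⁺ w) w : ℂ) + inner ℂ (M⁻ w) w).re := by
          rw [Complex.add_re]
      _ = _ := by rw [this, h2]
  calc ‖(inner ℂ (T x) y : ℂ)‖ = ‖(inner ℂ (M⁺ z) w : ℂ) - inner ℂ (M⁻ z) w‖ := by
        rw [h_inner, hsplit]
    _ ≤ ‖(inner ℂ (M⁺ z) w : ℂ)‖ + ‖(inner ℂ (M⁻ z) w : ℂ)‖ := norm_sub_le _ _
    _ ≤ Real.sqrt a1 * Real.sqrt c1 + Real.sqrt b1 * Real.sqrt d1 := by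
        gcongr
        · exact pwrb_cs_pos _ hp z w
        · exact pwrb_cs_pos _ hq z w
    _ ≤ Real.sqrt ((a1 + b1) * (c1 + d1)) := pwrb_sqrtCS ha1 hb1 hc1 hd1
    _ = _ := by
        rw [hsum1, hsum2, Real.sqrt_mul (by rw [← hsum1]; exact add_nonneg ha1 hb1)]

theorem pointwise_re_bound (T : H →L[ℂ] H) :
    ∀ x : H, ‖x‖ = 1 →
      ‖(inner ℂ (((1 / 2 : ℂ) • (CFC.sqrt (T ∘L adjoint T) - CFC.sqrt (adjoint T ∘L T)) +
          Complex.I • ((1 / 2 : ℂ) • (T + adjoint T))) x) x : ℂ)‖ ≤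
        (1 / 2) * (inner ℂ ((CFC.sqrt (adjoint T ∘L T) + CFC.sqrt (T ∘L adjoint T)) x) x : ℂ).re := by

  intro x _
  set A' := CFC.sqrt (adjoint T ∘L T) with hA'
  set B' := CFC.sqrt (T ∘L adjoint T) with hB'
  have hA0 : 0 ≤ A' := CFC.sqrt_nonneg _
  have hB0 : 0 ≤ B' := CFC.sqrt_nonneg _
  have hApos := (ContinuousLinearMap.nonneg_iff_isPositive _).mp hA0
  have hBpos := (ContinuousLinearMap.nonneg_iff_isPositive _).mp hB0
  set a := ((inner ℂ (A' x) x : ℂ)).re with ha_def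
  set b := ((inner ℂ (B' x) x : ℂ)).re with hb_def
  have ha : 0 ≤ a := (Complex.nonneg_iff.mp (hApos.inner_nonneg_left x)).1
  have hb : 0 ≤ b := (Complex.nonneg_iff.mp (hBpos.inner_nonneg_left x)).1
  have hAreal : (inner ℂ (A' x) x : ℂ) = (a : ℂ) := by
    have hsym := ContinuousLinearMap.isSelfAdjoint_iff_isSymmetric.mp hApos.isSelfAdjoint
    have h1 : (starRingEnd ℂ) (inner ℂ (A' x) x : ℂ) = inner ℂ (A' x) x := by
      rw [inner_conj_symm]
      exact (hsym x x).symm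
    exact ((Complex.conj_eq_iff_re.mp h1)).symm
  have hBreal : (inner ℂ (B' x) x : ℂ) = (b : ℂ) := by
    have hsym := ContinuousLinearMap.isSelfAdjoint_iff_isSymmetric.mp hBpos.isSelfAdjoint
    have h1 : (starRingEnd ℂ) (inner ℂ (B' x) x : ℂ) = inner ℂ (B' x) x := by
      rw [inner_conj_symm]
      exact (hsym x x).symm
    exact ((Complex.conj_eq_iff_re.mp h1)).symm
  set r := ((inner ℂ (T x) x : ℂ)).re with hr_def
  have hr2 : r ^ 2 ≤ a * b := by
    have hmx := pwrb_mixed T x x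
    have h1 : |r| ≤ ‖(inner ℂ (T x) x : ℂ)‖ := by
      exact Complex.abs_re_le_norm _
    have h2 : r ^ 2 ≤ (Real.sqrt a * Real.sqrt b) ^ 2 := by
      rw [← sq_abs]
      have := le_trans h1 hmx
      exact pow_le_pow_left₀ (abs_nonneg r) this 2
    calc r ^ 2 ≤ (Real.sqrt a * Real.sqrt b) ^ 2 := h2
      _ = a * b := by rw [mul_pow, Real.sq_sqrt ha, Real.sq_sqrt hb]
  have hTadj : (inner ℂ (adjoint T x) x : ℂ) = (starRingEnd ℂ) (inner ℂ (T x) x : ℂ) := by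
    rw [ContinuousLinearMap.adjoint_inner_left, ← inner_conj_symm]
  have hval : (inner ℂ (((1 / 2 : ℂ) • (B' - A') +
          Complex.I • ((1 / 2 : ℂ) • (T + adjoint T))) x) x : ℂ)
      = (((b - a) / 2 : ℝ) : ℂ) - Complex.I * (r : ℂ) := by
    rw [ContinuousLinearMap.add_apply, inner_add_left, ContinuousLinearMap.smul_apply,
      ContinuousLinearMap.smul_apply, ContinuousLinearMap.smul_apply,
      inner_smul_left, inner_smul_left, inner_smul_left,
      ContinuousLinearMap.sub_apply, inner_sub_left, ContinuousLinearMap.add_apply,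
      inner_add_left, hAreal, hBreal, hTadj, Complex.add_conj]
    rw [hr_def]
    simp only [map_div₀, map_one, map_ofNat, Complex.conj_I]
    push_cast
    ring
  rw [hval]
  have hRHS : ((inner ℂ ((A' + B') x) x : ℂ)).re = a + b := by
    rw [ContinuousLinearMap.add_apply, inner_add_left, Complex.add_re, ha_def, hb_def]
  rw [hRHS]
  have hnorm : ‖((((b - a) / 2 : ℝ) : ℂ) - Complex.I * (r : ℂ))‖
      = Real.sqrt (((b - a) / 2) ^ 2 + r ^ 2) := by
    rw [Complex.norm_def]
    congr 1
    simp [Complex.normSq_apply]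
    ring
  rw [hnorm]
  have hfin : Real.sqrt (((b - a) / 2) ^ 2 + r ^ 2) ≤ Real.sqrt (((a + b) / 2) ^ 2) := by
    apply Real.sqrt_le_sqrt
    nlinarith
  calc Real.sqrt (((b - a) / 2) ^ 2 + r ^ 2) ≤ Real.sqrt (((a + b) / 2) ^ 2) := hfin
    _ = (a + b) / 2 := Real.sqrt_sq (by positivity)
    _ = 1 / 2 * (a + b) := by ring
end
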